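/- arXiv:1109.2939 — 3 statements merged into one kernel-verified Lean document; each statement's English description precedes it below -/
import Mathlib

section
/- Let r ≤ m be positive integers and let L be an r×m matrix of integers of full rank r. Suppose A_1, …, A_m are Borel measurable subsets of the circle group T = ℝ/ℤ with S_L(A_1, …, A_m) = 0. Then there exist sets E_1, …, E_m ⊆ T of Haar measure zero such that ((A_1 \ E_1) × ⋯ × (A_m \ E_m)) ∩ ker_T L = ∅; moreover one can take A_i \ E_i to be the set of Lebesgue density points of A_i. -/
/-!
Suppose some `x ∈ ker_𝕋 L` had every coordinate `xᵢ ∈ Aᵢ` a density point of `Aᵢ`, and let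
`V_h ⊆ ker_𝕋 L` be the ball of radius `h` about `0`. Near `0`, `ker_𝕋 L` is the image of the real
kernel `ker_ℝ L`, so rescaling a fixed finite cover shows `μ(V_{2h}) ≤ N μ(V_h)`. Since
`S_L(A) = 0`, almost every `z ∈ V_h` has some `xᵢ + zᵢ ∉ Aᵢ`. For fixed `i`, the measure of these
`z` is at most `C h⁻¹ |B(xᵢ, h) \ Aᵢ| μ(V_{2h})`: average over translates by `s u`, `0 ≤ s ≲ h`,
for a real kernel vector `u` with `uᵢ = 1` (if there is none, `zᵢ = 0` near `0` and there is
nothing to bound). Density gives `|B(xᵢ, h) \ Aᵢ| = o(h)`, whence `μ(V_h) = o(μ(V_h))`, which is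
absurd as `μ(V_h) > 0`. So `Eᵢ = Aᵢ \ {density points}` works, and it is null by Lebesgue's
density theorem.
-/

open MeasureTheory Set

noncomputable section

/-- The circle group `𝕋 = ℝ/ℤ`, with its normalized Haar (probability) measure `volume`. -/
abbrev 𝕋 : Type := AddCircle (1 : ℝ)

/-- The group homomorphism `x ↦ Lx` induced by an integer matrix `L`. -/
def Lhom {r m : ℕ} (L : Matrix (Fin r) (Fin m) ℤ) (G : Type*) [AddCommGroup G] :
    (Fin m → G) →+ (Fin r → G) where
  toFun x := fun i => ∑ j, L i j • x j
  map_zero' := by ext i; simp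
  map_add' x y := by ext i; simp [smul_add, Finset.sum_add_distrib]

/-- `ker_𝕋 L`, the closed subgroup `{x ∈ 𝕋^m : Lx = 0}` of `𝕋^m`. -/
def kerT {r m : ℕ} (L : Matrix (Fin r) (Fin m) ℤ) : AddSubgroup (Fin m → 𝕋) :=
  (Lhom L 𝕋).ker

/-- `a` is a Lebesgue density point of `A ⊆ 𝕋`: the relative measure of `A` in intervals
(balls) shrinking to `a` tends to `1`. -/
def IsDensityPoint (A : Set 𝕋) (a : 𝕋) : Prop :=
  Filter.Tendsto (fun h : ℝ => volume (A ∩ Metric.ball a h) / volume (Metric.ball a h))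
    (nhdsWithin 0 (Set.Ioi 0)) (nhds 1)

open Filter Metric
open scoped ENNReal NNReal Topology

namespace AddCircle

variable {T : ℝ}

theorem exists_coe_eq_and_abs_eq_norm (x : AddCircle T) :
    ∃ s : ℝ, (s : AddCircle T) = x ∧ |s| = ‖x‖ := by
  obtain ⟨y, rfl⟩ := QuotientAddGroup.mk_surjective x
  refine ⟨y - round (T⁻¹ * y) * T, ?_, (norm_eq T).symm⟩
  rw [QuotientAddGroup.mk_sub, ← zsmul_eq_mul, QuotientAddGroup.mk_zsmul, coe_period, smul_zero,
    sub_zero]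

theorem norm_coe_le_abs (s : ℝ) : ‖(s : AddCircle T)‖ ≤ |s| :=
  QuotientAddGroup.norm_mk_le_norm

theorem eq_zero_of_coe_eq_zero_of_abs_lt {s : ℝ} (hs : (s : AddCircle T) = 0) (hsT : |s| < |T|) :
    s = 0 := by
  obtain ⟨n, rfl⟩ := (coe_eq_zero_iff T).mp hs
  rw [zsmul_eq_mul, abs_mul] at hsT
  have hn : |(n : ℝ)| < 1 := lt_of_mul_lt_mul_right (by simpa using hsT) (abs_nonneg T)
  simp [Int.abs_lt_one_iff.mp (by exact_mod_cast hn)]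

variable [Fact (0 < T)]

theorem volume_restrict_Icc_preimage_coe_le {a b : ℝ} (hab : b - a < T) {E : Set (AddCircle T)}
    (hE : MeasurableSet E) :
    volume.restrict (Icc a b) (((↑) : ℝ → AddCircle T) ⁻¹' E) ≤ volume E :=
  calc volume.restrict (Icc a b) (((↑) : ℝ → AddCircle T) ⁻¹' E)
      ≤ volume.restrict (Ioc (b - T) (b - T + T)) (((↑) : ℝ → AddCircle T) ⁻¹' E) :=
        Measure.restrict_mono (show Icc a b ⊆ Ioc (b - T) (b - T + T) from
          fun s hs => ⟨by linarith [hs.1], by linarith [hs.2]⟩) le_rfl _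
    _ = volume E := (AddCircle.measurePreserving_mk T (b - T)).measure_preimage hE.nullMeasurableSet

theorem volume_ball_le (x : AddCircle T) (ρ : ℝ) :
    volume (ball x ρ) ≤ ENNReal.ofReal (2 * ρ) :=
  (measure_mono ball_subset_closedBall).trans
    ((volume_closedBall T ρ).trans_le (ENNReal.ofReal_le_ofReal (min_le_right _ _)))

end AddCircle

theorem measure_ball_eq_measure_ball_zero {G : Type*} [NormedAddCommGroup G] [MeasurableSpace G]
    [MeasurableAdd G] (μ : Measure G) [μ.IsAddLeftInvariant] (g : G) (ρ : ℝ) :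
    μ (ball g ρ) = μ (ball 0 ρ) := by
  rw [← measure_preimage_add μ (-g) (ball 0 ρ), preimage_add_ball, zero_sub, neg_neg]

theorem measure_diff_setOf_isDensityPoint (A : Set 𝕋) :
    volume (A \ {a | IsDensityPoint A a}) = 0 := by
  have hdens : ∀ᵐ a ∂volume.restrict A, IsDensityPoint A a := by
    filter_upwards [IsUnifLocDoublingMeasure.ae_tendsto_measure_inter_div volume A 1] with a ha
    have hcl := ha (fun _ => a) id tendsto_id
      (eventually_mem_nhdsWithin.mono fun h (hh : 0 < h) => by simpa using hh.le)
    refine hcl.congr fun h => ?_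
    simp only [id]
    rw [measure_congr (AddCircle.closedBall_ae_eq_ball (x := a) (ε := h)),
      measure_congr ((ae_eq_refl A).inter AddCircle.closedBall_ae_eq_ball)]
  rw [← nonpos_iff_eq_zero, sdiff_eq, inter_comm]
  exact (Measure.le_restrict_apply _ _).trans (ae_iff.mp hdens).le

theorem IsDensityPoint.eventually_measure_ball_diff_le {A : Set 𝕋} {a : 𝕋}
    (hd : IsDensityPoint A a) (hA : MeasurableSet A) {ε : ℝ≥0∞} (hε : 0 < ε) :
    ∀ᶠ h in 𝓝[>] 0, volume (ball a h \ A) ≤ ε * volume (ball a h) := by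
  have hcompl : Tendsto (fun h : ℝ => 1 - volume (A ∩ ball a h) / volume (ball a h))
      (𝓝[>] 0) (𝓝 0) := by
    simpa using ENNReal.Tendsto.sub tendsto_const_nhds hd (.inl ENNReal.one_ne_top)
  filter_upwards [hcompl.eventually_lt_const hε, self_mem_nhdsWithin] with h hlt (hh : 0 < h)
  have hpos : volume (ball a h) ≠ 0 := (measure_ball_pos volume a hh).ne'
  have hfin : volume (ball a h) ≠ ⊤ := measure_ne_top _ _
  have hdiff : volume (ball a h \ A) = volume (ball a h) - volume (A ∩ ball a h) := by
    rw [← sdiff_inter_self_eq_sdiff, measure_sdiff inter_subset_right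
      (hA.inter measurableSet_ball).nullMeasurableSet (measure_ne_top _ _)]
  rw [hdiff, ← ENNReal.div_le_iff_le_mul (.inl hpos) (.inl hfin),
    ENNReal.sub_div (fun _ _ => hpos), ENNReal.div_self hpos hfin]
  exact hlt.le

section Kernel

variable {r m : ℕ} (L : Matrix (Fin r) (Fin m) ℤ)

theorem Lhom_comp {G H : Type*} [AddCommGroup G] [AddCommGroup H] (f : G →+ H) (x : Fin m → G) :
    Lhom L H (f ∘ x) = f ∘ Lhom L G x := by
  ext i
  simp [Lhom, map_sum, map_zsmul]

theorem continuous_Lhom (G : Type*) [AddCommGroup G] [TopologicalSpace G]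
    [IsTopologicalAddGroup G] : Continuous (Lhom L G) := by
  change Continuous fun (x : Fin m → G) (i : Fin r) => ∑ j, L i j • x j
  fun_prop

def realKer : Submodule ℝ (Fin m → ℝ) :=
  LinearMap.ker ((Lhom L ℝ).toRealLinearMap (continuous_Lhom L ℝ)).toLinearMap

theorem mem_realKer {w : Fin m → ℝ} : w ∈ realKer L ↔ Lhom L ℝ w = 0 := Iff.rfl

def realKerToKerT : realKer L →+ kerT L :=
  ((AddMonoidHom.compLeft (QuotientAddGroup.mk' _) (Fin m)).comp
    (realKer L).subtype.toAddMonoidHom).codRestrict (kerT L) fun w => by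
      change Lhom L 𝕋 (QuotientAddGroup.mk' (AddSubgroup.zmultiples (1 : ℝ)) ∘ w) = 0
      rw [Lhom_comp, (mem_realKer L).mp w.2]
      rfl

theorem norm_realKerToKerT_le (w : realKer L) : ‖realKerToKerT L w‖ ≤ ‖w‖ := by
  rw [AddSubgroup.coe_norm, Submodule.coe_norm, pi_norm_le_iff_of_nonneg (norm_nonneg _)]
  exact fun j => (AddCircle.norm_coe_le_abs _).trans (norm_le_pi_norm (w : Fin m → ℝ) j)

theorem Lhom_real_eq_zero_of_small {w : Fin m → ℝ}
    (hw : Lhom L 𝕋 (QuotientAddGroup.mk' (AddSubgroup.zmultiples (1 : ℝ)) ∘ w) = 0)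
    (hsmall : (∑ i, ∑ j, |(L i j : ℝ)|) * ‖w‖ < 1) : Lhom L ℝ w = 0 := by
  -- each entry of `Lw` is an integer, and a small one
  rw [Lhom_comp] at hw
  ext i
  refine AddCircle.eq_zero_of_coe_eq_zero_of_abs_lt (T := 1) (congrFun hw i) ?_
  calc |Lhom L ℝ w i| ≤ ∑ j, |(L i j : ℝ)| * ‖w‖ := by
        change |∑ j, L i j • w j| ≤ _
        refine (Finset.abs_sum_le_sum_abs _ _).trans (Finset.sum_le_sum fun j _ => ?_)
        rw [zsmul_eq_mul, abs_mul]
        gcongr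
        exact norm_le_pi_norm w j
    _ ≤ (∑ i, ∑ j, |(L i j : ℝ)|) * ‖w‖ := by
        rw [← Finset.sum_mul]
        gcongr
        exact Finset.single_le_sum (f := fun i => ∑ j, |(L i j : ℝ)|)
          (fun _ _ => by positivity) (Finset.mem_univ i)
    _ < |1| := by rwa [abs_one]

theorem exists_realKerToKerT_eq_of_norm_lt :
    ∃ δ > 0, ∀ z : kerT L, ‖z‖ < δ → ∃ w : realKer L, realKerToKerT L w = z ∧ ‖w‖ = ‖z‖ := by
  set S := ∑ i, ∑ j, |(L i j : ℝ)|
  refine ⟨(S + 1)⁻¹, by positivity, fun z hz => ?_⟩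
  choose w hw_coe hw_abs using fun j => AddCircle.exists_coe_eq_and_abs_eq_norm ((z : Fin m → 𝕋) j)
  have hw_norm : ‖w‖ = ‖z‖ := by
    rw [AddSubgroup.coe_norm, Pi.norm_def, Pi.norm_def]
    congr 2
    ext j
    simpa [← NNReal.coe_inj] using hw_abs j
  have hsmall : S * ‖w‖ < 1 := calc
    S * ‖w‖ ≤ (S + 1) * ‖z‖ := by rw [hw_norm]; gcongr; linarith
    _ < (S + 1) * (S + 1)⁻¹ := by gcongr
    _ = 1 := mul_inv_cancel₀ (by positivity)
  have hwz : QuotientAddGroup.mk' (AddSubgroup.zmultiples (1 : ℝ)) ∘ w = (z : Fin m → 𝕋) :=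
    funext hw_coe
  have hLw := Lhom_real_eq_zero_of_small L (hwz ▸ z.2) hsmall
  exact ⟨⟨w, hLw⟩, Subtype.ext (funext hw_coe), hw_norm⟩

def kerCoord (i : Fin m) : kerT L →+ 𝕋 :=
  (Pi.evalAddMonoidHom (fun _ => 𝕋) i).comp (kerT L).subtype

@[simp]
theorem kerCoord_realKerToKerT (i : Fin m) (w : realKer L) :
    kerCoord L i (realKerToKerT L w) = ((w : Fin m → ℝ) i : 𝕋) := rfl

@[fun_prop]
theorem continuous_kerCoord (i : Fin m) : Continuous (kerCoord L i) :=
  (continuous_apply i).comp continuous_subtype_val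

theorem norm_kerCoord_le (i : Fin m) (z : kerT L) : ‖kerCoord L i z‖ ≤ ‖z‖ :=
  norm_le_pi_norm (z : Fin m → 𝕋) i

end Kernel

section HaarMeasure

variable {r m : ℕ} (L : Matrix (Fin r) (Fin m) ℤ) (μ : Measure (kerT L)) [μ.IsAddLeftInvariant]

theorem exists_measure_ball_two_mul_le :
    ∃ N : ℕ, ∀ᶠ h in 𝓝[>] (0 : ℝ), μ (ball (0 : kerT L) (2 * h)) ≤ N * μ (ball 0 h) := by
  obtain ⟨δ, hδ, hlift⟩ := exists_realKerToKerT_eq_of_norm_lt L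
  obtain ⟨t, -, ht, hcover⟩ := (isCompact_closedBall (0 : realKer L) 2).finite_cover_balls one_pos
  refine ⟨ht.toFinset.card, ?_⟩
  filter_upwards [nhdsWithin_le_nhds (eventually_lt_nhds (half_pos hδ)), self_mem_nhdsWithin]
    with h hhδ (hh : 0 < h)
  -- rescaling by `h` moves the fixed cover of the ball of radius `2` in `ker_ℝ L` to `ker_𝕋 L`
  have hsub : ball (0 : kerT L) (2 * h) ⊆ ⋃ w ∈ ht.toFinset, ball (realKerToKerT L (h • w)) h := by
    intro z hz
    rw [mem_ball_zero_iff] at hz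
    obtain ⟨ω, rfl, hω⟩ := hlift _ (by linarith)
    have hω2 : h⁻¹ • ω ∈ closedBall (0 : realKer L) 2 := by
      rw [mem_closedBall_zero_iff, norm_smul, norm_inv, Real.norm_of_nonneg hh.le,
        inv_mul_le_iff₀ hh]
      linarith
    obtain ⟨w, hw, hdist⟩ := mem_iUnion₂.mp (hcover hω2)
    refine mem_iUnion₂.mpr ⟨w, ht.mem_toFinset.mpr hw, ?_⟩
    rw [mem_ball, dist_eq_norm] at hdist ⊢
    rw [← map_sub]
    calc ‖realKerToKerT L (ω - h • w)‖ ≤ ‖ω - h • w‖ := norm_realKerToKerT_le L _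
      _ = ‖h • (h⁻¹ • ω - w)‖ := by rw [smul_sub, smul_inv_smul₀ hh.ne']
      _ = h * ‖h⁻¹ • ω - w‖ := by rw [norm_smul, Real.norm_of_nonneg hh.le]
      _ < h := mul_lt_of_lt_one_right hh hdist
  calc μ (ball 0 (2 * h))
      ≤ ∑ w ∈ ht.toFinset, μ (ball (realKerToKerT L (h • w)) h) :=
        (measure_mono hsub).trans (measure_biUnion_finset_le _ _)
    _ = ht.toFinset.card * μ (ball 0 h) := by
        simp [measure_ball_eq_measure_ball_zero]

theorem ofReal_mul_measure_ball_inter_preimage_le [SFinite μ] {i : Fin m} {u : realKer L}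
    (hu : (u : Fin m → ℝ) i = 1) {τ h : ℝ} (hτ : τ < 1) (hτh : τ * ‖u‖ ≤ h)
    {B : Set 𝕋} (hB : MeasurableSet B) :
    ENNReal.ofReal τ * μ (ball 0 h ∩ kerCoord L i ⁻¹' B) ≤ volume B * μ (ball 0 (2 * h)) := by
  -- Fubini on `[0, τ] × ker_𝕋 L`: translating by `s • u` shifts the `i`-th coordinate by `s`
  set S : Set (ℝ × kerT L) := {p | p.2 ∈ ball 0 (2 * h) ∧ kerCoord L i p.2 + p.1 ∈ B}
  have hS : MeasurableSet S :=
    (measurableSet_ball.preimage measurable_snd).inter (hB.preimage (by fun_prop))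
  have hlower : ENNReal.ofReal τ * μ (ball 0 h ∩ kerCoord L i ⁻¹' B)
      ≤ (volume.restrict (Icc 0 τ)).prod μ S := by
    rw [Measure.prod_apply hS]
    calc ENNReal.ofReal τ * μ (ball 0 h ∩ kerCoord L i ⁻¹' B)
        = ∫⁻ _ in Icc 0 τ, μ (ball 0 h ∩ kerCoord L i ⁻¹' B) := by
          rw [setLIntegral_const, Real.volume_Icc, sub_zero, mul_comm]
      _ ≤ ∫⁻ s in Icc 0 τ, μ (Prod.mk s ⁻¹' S) := setLIntegral_mono' measurableSet_Icc ?_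
    rintro s ⟨hs0, hsτ⟩
    set g := realKerToKerT L (s • u)
    have hg : ‖g‖ ≤ h := calc
      ‖g‖ ≤ ‖s • u‖ := norm_realKerToKerT_le L _
      _ = s * ‖u‖ := by rw [norm_smul, Real.norm_of_nonneg hs0]
      _ ≤ h := by nlinarith [norm_nonneg u]
    rw [← measure_preimage_add μ (-g) (Prod.mk s ⁻¹' S)]
    refine measure_mono fun y ⟨hy, hyB⟩ => ⟨?_, ?_⟩
    · rw [mem_ball_zero_iff] at hy ⊢
      calc ‖-g + y‖ ≤ ‖g‖ + ‖y‖ := (norm_add_le _ _).trans_eq (by rw [norm_neg])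
        _ < 2 * h := by linarith
    · simpa [g, hu] using hyB
  have hupper : (volume.restrict (Icc 0 τ)).prod μ S ≤ volume B * μ (ball 0 (2 * h)) := by
    rw [Measure.prod_apply_symm hS, ← lintegral_indicator_const measurableSet_ball]
    refine lintegral_mono fun z => ?_
    by_cases hz : z ∈ ball 0 (2 * h)
    · have hfib : (fun s => (s, z)) ⁻¹' S = (↑) ⁻¹' ((kerCoord L i z + ·) ⁻¹' B) := by
        ext s; exact and_iff_right hz
      rw [indicator_of_mem hz, hfib, ← measure_preimage_add volume (kerCoord L i z) B]
      exact AddCircle.volume_restrict_Icc_preimage_coe_le (by linarith)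
        (hB.preimage (measurable_const_add _))
    · have hfib : (fun s => (s, z)) ⁻¹' S = ∅ := by
        ext s; exact iff_false_intro fun hs => hz hs.1
      simp [hfib, indicator_of_notMem hz]
  exact hlower.trans hupper

theorem exists_ofReal_mul_measure_ball_inter_preimage_le [SFinite μ] (i : Fin m) :
    ∃ c : ℝ≥0, ∀ᶠ h in 𝓝[>] (0 : ℝ), ∀ B : Set 𝕋, MeasurableSet B → (0 : 𝕋) ∉ B →
      ENNReal.ofReal h * μ (ball 0 h ∩ kerCoord L i ⁻¹' B) ≤ c * volume B * μ (ball 0 (2 * h)) := by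
  by_cases hdir : ∃ u : realKer L, (u : Fin m → ℝ) i ≠ 0
  · obtain ⟨u, hu⟩ := hdir
    set v := ((u : Fin m → ℝ) i)⁻¹ • u
    have hv : (v : Fin m → ℝ) i = 1 := by simp [v, hu]
    have hv1 : 1 ≤ ‖v‖ := by
      simpa [hv] using norm_le_pi_norm (v : Fin m → ℝ) i
    refine ⟨‖v‖₊, ?_⟩
    filter_upwards [nhdsWithin_le_nhds (eventually_lt_nhds one_pos)] with h hh1 B hB _
    have hslab := ofReal_mul_measure_ball_inter_preimage_le L μ hv (τ := h / ‖v‖)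
      (by rw [div_lt_one (by linarith)]; linarith) (div_mul_cancel₀ h (by positivity)).le hB
    calc ENNReal.ofReal h * μ (ball 0 h ∩ kerCoord L i ⁻¹' B)
        = ‖v‖₊ * (ENNReal.ofReal (h / ‖v‖) * μ (ball 0 h ∩ kerCoord L i ⁻¹' B)) := by
          rw [← ENNReal.ofReal_coe_nnreal, coe_nnnorm, ← mul_assoc,
            ← ENNReal.ofReal_mul (norm_nonneg _), mul_div_cancel₀ _ (by positivity)]
      _ ≤ ‖v‖₊ * (volume B * μ (ball 0 (2 * h))) := by gcongr
      _ = ‖v‖₊ * volume B * μ (ball 0 (2 * h)) := (mul_assoc _ _ _).symm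
  · -- near `0`, the `i`-th coordinate vanishes on `ker_𝕋 L`
    push Not at hdir
    obtain ⟨δ, hδ, hlift⟩ := exists_realKerToKerT_eq_of_norm_lt L
    refine ⟨0, ?_⟩
    filter_upwards [nhdsWithin_le_nhds (eventually_lt_nhds hδ)] with h hhδ B _ h0B
    have hempty : ball (0 : kerT L) h ∩ kerCoord L i ⁻¹' B = ∅ := by
      refine eq_empty_of_forall_notMem fun z ⟨hz, hzB⟩ => h0B ?_
      obtain ⟨w, rfl, -⟩ := hlift z ((mem_ball_zero_iff.mp hz).trans hhδ)
      simpa [hdir w] using hzB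
    simp [hempty]

theorem measure_ball_le_sum_measure_ball_inter_preimage {A : Fin m → Set 𝕋}
    (hzero : μ {z | ∀ i, kerCoord L i z ∈ A i} = 0) (x : kerT L) (h : ℝ) :
    μ (ball 0 h) ≤ ∑ i, μ (ball 0 h ∩
      kerCoord L i ⁻¹' ((kerCoord L i x + ·) ⁻¹' (ball (kerCoord L i x) h \ A i))) := by
  have hsub : ball (0 : kerT L) h ⊆ (x + ·) ⁻¹' {z | ∀ i, kerCoord L i z ∈ A i} ∪
      ⋃ i, ball 0 h ∩
        kerCoord L i ⁻¹' ((kerCoord L i x + ·) ⁻¹' (ball (kerCoord L i x) h \ A i)) := by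
    intro z hz
    by_cases hall : ∀ i, kerCoord L i (x + z) ∈ A i
    · exact Or.inl hall
    · obtain ⟨i, hi⟩ := not_forall.mp hall
      refine Or.inr (mem_iUnion.mpr ⟨i, hz, ?_, by simpa using hi⟩)
      simpa [dist_eq_norm] using (norm_kerCoord_le L i z).trans_lt (mem_ball_zero_iff.mp hz)
  calc μ (ball 0 h)
      ≤ μ ((x + ·) ⁻¹' {z | ∀ i, kerCoord L i z ∈ A i}) + μ (⋃ i, ball 0 h ∩
          kerCoord L i ⁻¹' ((kerCoord L i x + ·) ⁻¹' (ball (kerCoord L i x) h \ A i))) :=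
        (measure_mono hsub).trans (measure_union_le _ _)
    _ ≤ _ := by
        rw [measure_preimage_add, hzero, zero_add]
        exact measure_iUnion_fintype_le _ _

end HaarMeasure

theorem measure_setOf_forall_mem_ne_zero {r m : ℕ} (L : Matrix (Fin r) (Fin m) ℤ)
    (μ : Measure (kerT L)) [μ.IsAddHaarMeasure] [IsFiniteMeasure μ]
    {A : Fin m → Set 𝕋} (hA : ∀ i, MeasurableSet (A i)) {x : kerT L}
    (hxA : ∀ i, kerCoord L i x ∈ A i) (hx : ∀ i, IsDensityPoint (A i) (kerCoord L i x)) :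
    μ {z | ∀ i, kerCoord L i z ∈ A i} ≠ 0 := by
  intro hzero
  choose c hc using exists_ofReal_mul_measure_ball_inter_preimage_le L μ
  obtain ⟨N, hN⟩ := exists_measure_ball_two_mul_le L μ
  set K : ℝ≥0∞ := 2 * N * ∑ i, (c i : ℝ≥0∞)
  obtain ⟨ε, hε, hεK⟩ := ENNReal.exists_pos_mul_lt (a := K) (b := 1)
    (by simp [K, ENNReal.mul_ne_top]) one_ne_zero
  obtain ⟨h, hh, hNh, hch, hdh⟩ := (eventually_mem_nhdsWithin.and (hN.and
    ((eventually_all.mpr hc).and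
      (eventually_all.mpr fun i => (hx i).eventually_measure_ball_diff_le (hA i) hε)))).exists
  set V := μ (ball (0 : kerT L) h)
  set B : Fin m → Set 𝕋 := fun i => (kerCoord L i x + ·) ⁻¹' (ball (kerCoord L i x) h \ A i)
  have hbad : ∀ i, ENNReal.ofReal h * μ (ball 0 h ∩ kerCoord L i ⁻¹' B i)
      ≤ c i * (ε * (2 * ENNReal.ofReal h)) * (N * V) := by
    intro i
    refine (hch i _ ((measurableSet_ball.diff (hA i)).preimage (measurable_const_add _))
      (by simp [hxA i])).trans ?_
    rw [measure_preimage_add]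
    gcongr
    refine (hdh i).trans (mul_le_mul_right ?_ _)
    rw [← ENNReal.ofReal_ofNat 2, ← ENNReal.ofReal_mul zero_le_two]
    exact AddCircle.volume_ball_le _ _
  have hV : ENNReal.ofReal h * V ≤ ε * K * (ENNReal.ofReal h * V) := calc
    ENNReal.ofReal h * V ≤ ENNReal.ofReal h * ∑ i, μ (ball 0 h ∩ kerCoord L i ⁻¹' B i) := by
      gcongr
      exact measure_ball_le_sum_measure_ball_inter_preimage L μ hzero x h
    _ ≤ ∑ i, c i * (ε * (2 * ENNReal.ofReal h)) * (N * V) := by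
      rw [Finset.mul_sum]
      exact Finset.sum_le_sum fun i _ => hbad i
    _ = ε * K * (ENNReal.ofReal h * V) := by
      rw [← Finset.sum_mul, ← Finset.sum_mul]
      ring
  have hV0 : ENNReal.ofReal h * V ≠ 0 :=
    mul_ne_zero (by simpa using hh) (measure_ball_pos μ 0 hh).ne'
  have hVtop : ENNReal.ofReal h * V ≠ ⊤ :=
    ENNReal.mul_ne_top ENNReal.ofReal_ne_top (measure_ne_top _ _)
  exact (hV.trans_lt (by simpa [mul_comm] using ENNReal.mul_lt_mul_right hV0 hVtop hεK)).false

theorem zero_removal_circle_general {r m : ℕ}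
    (L : Matrix (Fin r) (Fin m) ℤ)
    (μL : Measure (kerT L)) (hHaar : μL.IsAddHaarMeasure) (hprob : IsProbabilityMeasure μL)
    (A : Fin m → Set 𝕋) (hA : ∀ i, MeasurableSet (A i))
    (hzero : μL {x : kerT L | ∀ i, (x : Fin m → 𝕋) i ∈ A i} = 0) :
    ∃ E : Fin m → Set 𝕋,
      (∀ i, volume (E i) = 0) ∧
      (∀ i, A i \ E i = {a ∈ A i | IsDensityPoint (A i) a}) ∧
      ∀ x : kerT L, ¬ (∀ i, (x : Fin m → 𝕋) i ∈ A i \ E i) := by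
  refine ⟨fun i => A i \ {a | IsDensityPoint (A i) a},
    fun i => measure_diff_setOf_isDensityPoint (A i), fun i => sdiff_sdiff_right_self, ?_⟩
  intro x hx
  exact measure_setOf_forall_mem_ne_zero L μL hA (fun i => (hx i).1)
    (fun i => not_not.mp fun hi => (hx i).2 ⟨(hx i).1, hi⟩) hzero

/-- **Removal of solutions for sets with zero solution measure.**
If `L` is an `r × m` integer matrix of full rank `r` (with `0 < r ≤ m`), `μL` is the
normalized Haar probability measure on `ker_𝕋 L`, and `A₁, …, A_m` are Borel subsets of
`𝕋` with `S_L(A₁, …, A_m) = 0`, then there are null sets `E₁, …, E_m ⊆ 𝕋` with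
`((A₁ \ E₁) × ⋯ × (A_m \ E_m)) ∩ ker_𝕋 L = ∅`; moreover one can take `A_i \ E_i` to be
the set of Lebesgue density points of `A_i` (that lie in `A_i`). -/
theorem zero_removal_circle {r m : ℕ} (hr : 0 < r) (hrm : r ≤ m)
    (L : Matrix (Fin r) (Fin m) ℤ)
    (hrank : (L.map (Int.cast : ℤ → ℚ)).rank = r)
    (μL : Measure (kerT L)) (hHaar : μL.IsAddHaarMeasure) (hprob : IsProbabilityMeasure μL)
    (A : Fin m → Set 𝕋) (hA : ∀ i, MeasurableSet (A i))
    (hzero : μL {x : kerT L | ∀ i, (x : Fin m → 𝕋) i ∈ A i} = 0) :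
    ∃ E : Fin m → Set 𝕋,
      (∀ i, volume (E i) = 0) ∧
      (∀ i, A i \ E i = {a ∈ A i | IsDensityPoint (A i) a}) ∧
      ∀ x : kerT L, ¬ (∀ i, (x : Fin m → 𝕋) i ∈ A i \ E i) :=
  zero_removal_circle_general L μL hHaar hprob A hA hzero
end
end

section
/- Let L be an r×m integer matrix of invariant type (L𝟙 = 0) and of full rank r, and let A ⊆ T = ℝ/ℤ be a Borel measurable set of positive Haar measure. Then S_L(A) > 0. -/
open MeasureTheory Set

noncomputable section

/-!
Because `L𝟙 = 0`, the kernel is invariant under the diagonal translations `x ↦ x + t𝟙`. Averaging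
over `t` with Fubini and the invariance of `μL` gives
`S_L(A) = ∫ μ_𝕋 {t : x + t𝟙 ∈ Aᵐ} dμL(x)`. Translation is continuous in measure, so
`μ_𝕋 (A ∖ (A - s)) → 0` as `s → 0`; hence the integrand is at least `μ_𝕋(A)/2` on a neighbourhood
of `0` in the kernel, and such a neighbourhood has positive Haar measure.
-/

open Filter Topology
open scoped symmDiff ENNReal

section Translates

variable {G : Type*} [AddGroup G] [TopologicalSpace G] [IsTopologicalAddGroup G] [R1Space G]
  [MeasurableSpace G] [BorelSpace G] {μ : Measure G} [μ.IsAddLeftInvariant]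
  [μ.InnerRegularCompactLTTop] [IsLocallyFiniteMeasure μ] {A : Set G}

theorem tendsto_measure_preimage_add_symmDiff_nhds_zero (hA : NullMeasurableSet A μ)
    (hμA : μ A ≠ ∞) : Tendsto (fun g ↦ μ (((g + ·) ⁻¹' A) ∆ A)) (𝓝 0) (𝓝 0) := by
  let translate : C(G, C(G, G)) := ContinuousMap.curry ⟨fun p ↦ p.1 + p.2, continuous_add⟩
  have h := tendsto_measure_symmDiff_preimage_nhds_zero (translate.continuous.tendsto 0)
    (.of_forall fun g ↦ measurePreserving_add_left μ g) (measurePreserving_add_left μ 0) hA hμA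
  convert h using 5 <;> ext <;> simp [translate]

theorem eventually_lt_measure_setOf_forall_add_mem {ι : Type*} [Finite ι]
    (hA : NullMeasurableSet A μ) (hμA : μ A ≠ ∞) {c : ℝ≥0∞} (hc : c < μ A) :
    ∀ᶠ x in 𝓝 (0 : ι → G), c < μ {t | ∀ i, x i + t ∈ A} := by
  have : Fintype ι := Fintype.ofFinite ι
  have hsum : Tendsto (fun x : ι → G ↦ ∑ i, μ (((x i + ·) ⁻¹' A) ∆ A)) (𝓝 0) (𝓝 0) := by
    simpa using tendsto_finsetSum _ fun i _ ↦
      (tendsto_measure_preimage_add_symmDiff_nhds_zero hA hμA).comp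
        ((continuous_apply i).tendsto' 0 0 rfl)
  filter_upwards [hsum.eventually (gt_mem_nhds (tsub_pos_of_lt hc))] with x hx
  have hcover : A ⊆ {t | ∀ i, x i + t ∈ A} ∪ ⋃ i, ((x i + ·) ⁻¹' A) ∆ A := by
    intro t ht
    by_cases h : ∀ i, x i + t ∈ A
    · exact Or.inl h
    · obtain ⟨i, hi⟩ := not_forall.mp h
      exact Or.inr (mem_iUnion.mpr ⟨i, Or.inr ⟨ht, hi⟩⟩)
  have hle : μ A ≤ μ {t | ∀ i, x i + t ∈ A} + ∑ i, μ (((x i + ·) ⁻¹' A) ∆ A) :=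
    calc μ A ≤ μ ({t | ∀ i, x i + t ∈ A} ∪ ⋃ i, ((x i + ·) ⁻¹' A) ∆ A) := measure_mono hcover
      _ ≤ _ := (measure_union_le _ _).trans (by gcongr; exact measure_iUnion_fintype_le _ _)
  exact (lt_tsub_comm.mp hx).trans_le (tsub_le_iff_right.mpr hle)

instance AddSubgroup.instMeasurableAdd {G : Type*} [AddGroup G] [MeasurableSpace G]
    [MeasurableAdd G] (K : AddSubgroup G) : MeasurableAdd K where
  measurable_const_add c := ((measurable_const_add (c : G)).comp measurable_subtype_coe).subtype_mk
  measurable_add_const c := ((measurable_add_const (c : G)).comp measurable_subtype_coe).subtype_mk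

variable (μ) in
theorem measure_setOf_forall_mem_pos_of_const_mem [MeasurableAdd₂ G] [SFinite μ] {ι : Type*}
    [Finite ι] (K : AddSubgroup (ι → G)) (hK : ∀ t : G, (fun _ ↦ t) ∈ K) (ν : Measure K)
    [ν.IsAddRightInvariant] [ν.IsOpenPosMeasure] [SFinite ν] (hA : MeasurableSet A)
    (hμA : 0 < μ A) (hμA' : μ A ≠ ∞) :
    0 < ν {x : K | ∀ i, (x : ι → G) i ∈ A} := by
  set B := {x : K | ∀ i, (x : ι → G) i ∈ A}
  set S : Set (K × G) := {p | ∀ i, (p.1 : ι → G) i + p.2 ∈ A}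
  set N := {x : K | μ A / 2 ≤ μ {t | ∀ i, (x : ι → G) i + t ∈ A}}
  have hS : MeasurableSet S := by
    simp only [S, ofPred_forall]
    exact MeasurableSet.iInter fun i ↦ hA.preimage <|
      ((measurable_pi_apply i).comp (measurable_subtype_coe.comp measurable_fst)).add
        measurable_snd
  have hfiber (t : G) : (fun x ↦ (x, t)) ⁻¹' S = (· + ⟨fun _ ↦ t, hK t⟩) ⁻¹' B := rfl
  have hN : N ∈ 𝓝 0 :=
    (continuous_subtype_val.tendsto' 0 0 rfl).eventually
      ((eventually_lt_measure_setOf_forall_add_mem hA.nullMeasurableSet hμA'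
        (ENNReal.half_lt_self hμA.ne' hμA')).mono fun _ h ↦ h.le)
  have hpos : 0 < ν B * μ univ :=
    calc 0 < μ A / 2 * ν N :=
          ENNReal.mul_pos (ENNReal.half_pos hμA.ne').ne' (Measure.measure_pos_of_mem_nhds ν hN).ne'
      _ ≤ ∫⁻ x, μ (Prod.mk x ⁻¹' S) ∂ν :=
          mul_meas_ge_le_lintegral₀ (measurable_measure_prodMk_left hS).aemeasurable _
      _ = ∫⁻ t, ν ((fun x ↦ (x, t)) ⁻¹' S) ∂μ := by
          rw [← Measure.prod_apply hS, Measure.prod_apply_symm hS]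
      _ = ν B * μ univ := by
          simp only [hfiber, measure_preimage_add_right, lintegral_const]
  exact (ENNReal.mul_pos_iff.mp hpos).1

end Translates

theorem const_mem_kerT {r m : ℕ} {L : Matrix (Fin r) (Fin m) ℤ} (hinv : ∀ i, ∑ j, L i j = 0)
    (t : 𝕋) : (fun _ ↦ t) ∈ kerT L :=
  AddMonoidHom.mem_ker.mpr <| funext fun i ↦ by simp [Lhom, ← Finset.sum_smul, hinv i]

theorem isClosed_kerT {r m : ℕ} (L : Matrix (Fin r) (Fin m) ℤ) :
    IsClosed (kerT L : Set (Fin m → 𝕋)) :=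
  isClosed_singleton.preimage (f := Lhom L 𝕋)
    (by fun_prop : Continuous fun (x : Fin m → 𝕋) i ↦ ∑ j, L i j • x j)

instance instCompactSpaceKerT {r m : ℕ} (L : Matrix (Fin r) (Fin m) ℤ) : CompactSpace (kerT L) :=
  isCompact_iff_compactSpace.mp (isClosed_kerT L).isCompact

theorem pos_measure_pos_solutions_general {r m : ℕ} (L : Matrix (Fin r) (Fin m) ℤ)
    (hinv : ∀ i, ∑ j, L i j = 0)
    (μL : Measure (kerT L)) (hHaar : μL.IsAddHaarMeasure)
    (A : Set 𝕋) (hA : MeasurableSet A) (hpos : 0 < volume A) :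
    0 < μL {x : kerT L | ∀ i, (x : Fin m → 𝕋) i ∈ A} :=
  measure_setOf_forall_mem_pos_of_const_mem volume (kerT L) (const_mem_kerT hinv) μL hA hpos
    (measure_ne_top _ _)

/-- If `L` is an invariant (`L𝟙 = 0`) `r × m` integer matrix of full rank `r`, `μL` is the
normalized Haar probability measure on `ker_𝕋 L`, and `A ⊆ 𝕋` is a Borel set of positive
Haar measure, then `S_L(A) = μL(A^m ∩ ker_𝕋 L) > 0`. -/
theorem pos_measure_pos_solutions {r m : ℕ} (L : Matrix (Fin r) (Fin m) ℤ)
    (hrank : (L.map (Int.cast : ℤ → ℚ)).rank = r)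
    (hinv : ∀ i, ∑ j, L i j = 0)
    (μL : Measure (kerT L)) (hHaar : μL.IsAddHaarMeasure) (hprob : IsProbabilityMeasure μL)
    (A : Set 𝕋) (hA : MeasurableSet A) (hpos : 0 < volume A) :
    0 < μL {x : kerT L | ∀ i, (x : Fin m → 𝕋) i ∈ A} :=
  pos_measure_pos_solutions_general L hinv μL hHaar A hA hpos
end
end

section
/- Let L be an r×m integer matrix of full rank r such that every r×(m−1) submatrix of L (obtained by deleting one column) has rank r. Then for each i ∈ {1, …, m}, the coordinate projection ker_T L → T, x ↦ x_i, is surjective. -/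
open MeasureTheory Set

noncomputable section

lemma exists_rat_ker {r m : ℕ} (L : Matrix (Fin r) (Fin m) ℤ)
    (hrank : (L.map (Int.cast : ℤ → ℚ)).rank = r)
    (i : Fin m) (hsubi : ((L.submatrix id (Subtype.val : {k : Fin m // k ≠ i} → Fin m)).map
        (Int.cast : ℤ → ℚ)).rank = r) :
    ∃ v : Fin m → ℚ, (L.map (Int.cast : ℤ → ℚ)).mulVec v = 0 ∧ v i ≠ 0 := by
  by_contra h
  push_neg at h
  set A := (L.map (Int.cast : ℤ → ℚ)).mulVecLin with hA
  set M := (L.submatrix id (Subtype.val : {k : Fin m // k ≠ i} → Fin m)).map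
      (Int.cast : ℤ → ℚ) with hM
  set B := M.mulVecLin with hB
  have hcard : Fintype.card {k : Fin m // k ≠ i} = m - 1 := by
    simp [Fintype.card_subtype_compl]
  have hrm : r + 1 ≤ m := by
    have := M.rank_le_card_width
    rw [hsubi, hcard] at this
    have hm : 0 < m := Fin.pos i
    omega
  have hkerA : Module.finrank ℚ (LinearMap.ker A) = m - r := by
    have := LinearMap.finrank_range_add_finrank_ker A
    rw [Module.finrank_fintype_fun_eq_card, Fintype.card_fin] at this
    have hr : Module.finrank ℚ (LinearMap.range A) = r := hrank
    omega
  have hkerB : Module.finrank ℚ (LinearMap.ker B) = m - 1 - r := by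
    have := LinearMap.finrank_range_add_finrank_ker B
    rw [Module.finrank_fintype_fun_eq_card, hcard] at this
    have hr : Module.finrank ℚ (LinearMap.range B) = r := hsubi
    omega
  -- build injection ker A → ker B
  have hres : ∀ v : Fin m → ℚ, A v = 0 → B (v ∘ Subtype.val) = 0 := by
    intro v hv
    have hvi : v i = 0 := h v hv
    funext k
    have hk : A v k = 0 := by rw [hv]; rfl
    rw [hA, Matrix.mulVecLin_apply, Matrix.mulVec, dotProduct] at hk
    rw [hB, Matrix.mulVecLin_apply, Matrix.mulVec, dotProduct]
    simp only [Pi.zero_apply]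
    rw [← hk]
    simp only [hM, Matrix.map_apply, Matrix.submatrix_apply, id_eq, Function.comp_apply]
    rw [← Finset.sum_subtype (Finset.univ.erase i)
      (p := fun k : Fin m => k ≠ i) (by simp) (fun j => ((L k j : ℚ)) * v j)]
    rw [Finset.sum_erase_eq_sub (Finset.mem_univ i)]
    simp [hvi]
  let φ : LinearMap.ker A →ₗ[ℚ] LinearMap.ker B :=
    LinearMap.codRestrict _
      ((LinearMap.funLeft ℚ ℚ (Subtype.val : {k : Fin m // k ≠ i} → Fin m)).comp
        (LinearMap.ker A).subtype)
      (fun v => by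
        rw [LinearMap.mem_ker]
        exact hres v (LinearMap.mem_ker.mp v.2))
  have hinj : Function.Injective φ := by
    intro v w hvw
    ext j
    by_cases hj : j = i
    · subst hj
      rw [h v (LinearMap.mem_ker.mp v.2), h w (LinearMap.mem_ker.mp w.2)]
    · exact congrFun (congrArg Subtype.val hvw) ⟨j, hj⟩
  have := LinearMap.finrank_le_finrank_of_injective hinj
  rw [hkerA, hkerB] at this
  omega

/-- If `L` is an `r × m` integer matrix of full rank `r` such that every `r × (m-1)`
submatrix obtained by deleting one column also has rank `r`, then for each `i` the
coordinate projection `ker_𝕋 L → 𝕋`, `x ↦ x_i`, is surjective. -/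
theorem kernel_projection_surjective {r m : ℕ} (L : Matrix (Fin r) (Fin m) ℤ)
    (hrank : (L.map (Int.cast : ℤ → ℚ)).rank = r)
    (hsub : ∀ j : Fin m,
      ((L.submatrix id (Subtype.val : {k : Fin m // k ≠ j} → Fin m)).map
        (Int.cast : ℤ → ℚ)).rank = r)
    (i : Fin m) :
    Function.Surjective fun x : kerT L => (x : Fin m → 𝕋) i := by
  intro t
  obtain ⟨v, hv, hvi⟩ := exists_rat_ker L hrank i (hsub i)
  induction t using QuotientAddGroup.induction_on with
  | H τ =>
  set φ : ℝ →+ 𝕋 := QuotientAddGroup.mk' (AddSubgroup.zmultiples (1 : ℝ)) with hφ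
  set y : Fin m → ℝ := fun j => (τ / (v i : ℝ)) * (v j : ℝ) with hy
  have hvi' : (v i : ℝ) ≠ 0 := by exact_mod_cast hvi
  have hyker : ∀ k, ∑ j, (L k j : ℝ) * y j = 0 := by
    intro k
    have hk : ∑ j, (L k j : ℚ) * v j = 0 := by
      have := congrFun hv k
      simpa [Matrix.mulVec, dotProduct] using this
    have hk' : ∑ j, (L k j : ℝ) * (v j : ℝ) = 0 := by
      exact_mod_cast congrArg (Rat.cast : ℚ → ℝ) hk
    calc ∑ j, (L k j : ℝ) * y j = (τ / (v i : ℝ)) * ∑ j, (L k j : ℝ) * (v j : ℝ) := by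
          rw [Finset.mul_sum]; congr 1; funext j; ring
      _ = 0 := by rw [hk', mul_zero]
  refine ⟨⟨fun j => φ (y j), ?_⟩, ?_⟩
  · show Lhom L 𝕋 (fun j => φ (y j)) = 0
    funext k
    show ∑ j, L k j • φ (y j) = 0
    calc ∑ j, L k j • φ (y j) = ∑ j, φ (L k j • y j) := by
          simp only [map_zsmul]
      _ = φ (∑ j, L k j • y j) := (map_sum φ _ _).symm
      _ = φ 0 := by
          congr 1
          simpa [zsmul_eq_mul] using hyker k
      _ = 0 := map_zero φ
  · show φ (y i) = ↑τ
    have : y i = τ := by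
      rw [hy]; field_simp
    rw [this, hφ, QuotientAddGroup.mk'_apply]
end
end
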